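/- Let m ≥ 1 and w_1,…,w_n be positive integers summing to m, with f_i defined as above and σ_i the first ⌈log₂(m/w_i)⌉ + 1 bits of f_i's binary expansion. Then the σ_i are lexicographically strictly increasing in i. -/

import Mathlib

open Finset

/-- The first `L` bits of the binary expansion of a real `f ∈ [0,1)`. -/
noncomputable def binaryBits (f : ℝ) (L : ℕ) : List Bool :=
  (List.range L).map (fun k => decide (⌊f * 2 ^ (k + 1)⌋₊ % 2 = 1))

/-!
Item `i` occupies the interval `[S_i/m, (S_i + w_i)/m)` of `[0,1)`, where `S_i = ∑_{j<i} w_j`, and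
`f_i` is its midpoint; hence `f_i + w_i/(2m) + w_{i'}/(2m) ≤ f_{i'}` for `i < i'`. The truncation
length `L_j` of `σ_j` is chosen so that `2^{-L_j} ≤ w_j/(2m)`, so `f_{i'} - f_i ≥ 2^{-L}` with
`L = min L_i L_{i'}`. Two reals of `[0,1)` at distance at least `2^{-L}` are already strictly ordered
by their first `L` bits (strip the leading bit and double), and both `σ_i` and `σ_{i'}` begin with
the first `L` bits of `f_i`, resp. `f_{i'}`.
-/

theorem List.Lex.append_of_length_eq {α : Type*} {r : α → α → Prop} {l₁ l₂ : List α}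
    (h : List.Lex r l₁ l₂) (hlen : l₁.length = l₂.length) (t₁ t₂ : List α) :
    List.Lex r (l₁ ++ t₁) (l₂ ++ t₂) := by
  induction h with
  | nil => simp at hlen
  | cons _ ih => exact .cons (ih (by simpa using hlen))
  | rel h => exact .rel h

theorem length_binaryBits (f : ℝ) (L : ℕ) : (binaryBits f L).length = L := by
  simp [binaryBits]

theorem binaryBits_isPrefix_of_le (f : ℝ) {L L' : ℕ} (h : L ≤ L') :
    binaryBits f L <+: binaryBits f L' := by
  have : (binaryBits f L').take L = binaryBits f L := by
    rw [binaryBits, ← List.map_take, List.take_range, min_eq_left h, binaryBits]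
  exact this ▸ List.take_prefix L _

theorem binaryBits_succ (f : ℝ) (L : ℕ) :
    binaryBits f (L + 1) = decide (⌊f * 2⌋₊ % 2 = 1) :: binaryBits (2 * f) L := by
  simp only [binaryBits, List.range_succ_eq_map, List.map_cons, List.map_map, zero_add, pow_one]
  congr 1
  refine List.map_congr_left fun k _ => ?_
  simp only [Function.comp_apply, pow_succ]
  ring_nf

theorem binaryBits_add_natCast {x : ℝ} (hx : 0 ≤ x) (n L : ℕ) :
    binaryBits (x + n) L = binaryBits x L := by
  refine List.map_congr_left fun k _ => ?_
  have hfloor : ⌊(x + n) * 2 ^ (k + 1)⌋₊ = ⌊x * 2 ^ (k + 1)⌋₊ + n * 2 ^ k * 2 := by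
    rw [← Nat.floor_add_natCast (by positivity)]
    push_cast
    ring_nf
  rw [hfloor, Nat.add_mul_mod_self_right]

theorem binaryBits_succ_of_lt_half {x : ℝ} (hx : x < 1 / 2) (L : ℕ) :
    binaryBits x (L + 1) = false :: binaryBits (2 * x) L := by
  rw [binaryBits_succ, Nat.floor_eq_zero.mpr (by linarith)]
  rfl

theorem binaryBits_succ_of_half_le {x : ℝ} (hx : 1 / 2 ≤ x) (hx₁ : x < 1) (L : ℕ) :
    binaryBits x (L + 1) = true :: binaryBits (2 * x - 1) L := by
  have hfloor : ⌊x * 2⌋₊ = 1 := by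
    rw [Nat.floor_eq_iff (by linarith)]
    constructor <;> push_cast <;> linarith
  rw [binaryBits_succ, hfloor, ← binaryBits_add_natCast (x := 2 * x - 1) (by linarith) 1]
  norm_num

theorem binaryBits_lex_of_add_inv_two_pow_le {x y : ℝ} {L : ℕ} (hx : 0 ≤ x) (hy : y < 1)
    (hxy : x + (2 ^ L)⁻¹ ≤ y) : List.Lex (· < ·) (binaryBits x L) (binaryBits y L) := by
  induction L generalizing x y with
  | zero => norm_num at hxy; linarith
  | succ L ih =>
    have hε : (0 : ℝ) < (2 ^ (L + 1))⁻¹ := by positivity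
    have hxy' : 2 * x + (2 ^ L)⁻¹ ≤ 2 * y := by
      rw [pow_succ, mul_inv] at hxy
      linarith
    rcases lt_or_ge y (1 / 2) with hy₂ | hy₂
    · rw [binaryBits_succ_of_lt_half (by linarith), binaryBits_succ_of_lt_half hy₂]
      exact .cons (ih (by linarith) (by linarith) hxy')
    rcases lt_or_ge x (1 / 2) with hx₂ | hx₂
    · rw [binaryBits_succ_of_lt_half hx₂, binaryBits_succ_of_half_le hy₂ hy]
      exact .rel (by decide)
    · rw [binaryBits_succ_of_half_le hx₂ (by linarith), binaryBits_succ_of_half_le hy₂ hy]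
      exact .cons (ih (by linarith) (by linarith) (by linarith))

theorem binaryBits_lex_of_add_inv_two_pow_add_le {x y : ℝ} {L L' : ℕ} (hx : 0 ≤ x) (hy : y < 1)
    (hxy : x + (2 ^ L)⁻¹ + (2 ^ L')⁻¹ ≤ y) :
    List.Lex (· < ·) (binaryBits x L) (binaryBits y L') := by
  have hmin : x + (2 ^ min L L')⁻¹ ≤ y := by
    have : (0 : ℝ) < (2 ^ L)⁻¹ := by positivity
    have : (0 : ℝ) < (2 ^ L')⁻¹ := by positivity
    rcases min_cases L L' with ⟨h, _⟩ | ⟨h, _⟩ <;> rw [h] <;> linarith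
  obtain ⟨t, ht⟩ := binaryBits_isPrefix_of_le x (min_le_left L L')
  obtain ⟨t', ht'⟩ := binaryBits_isPrefix_of_le y (min_le_right L L')
  rw [← ht, ← ht']
  exact (binaryBits_lex_of_add_inv_two_pow_le hx hy hmin).append_of_length_eq
    (by simp only [length_binaryBits]) t t'

theorem le_two_pow_toNat_ceil_logb {x : ℝ} (hx : 0 < x) : x ≤ 2 ^ ⌈Real.logb 2 x⌉.toNat := by
  rw [← Real.rpow_natCast, ← Real.logb_le_iff_le_rpow one_lt_two hx]
  calc Real.logb 2 x ≤ ⌈Real.logb 2 x⌉ := Int.le_ceil _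
    _ ≤ (⌈Real.logb 2 x⌉.toNat : ℤ) := by exact_mod_cast Int.self_le_toNat _

theorem inv_two_pow_toNat_ceil_logb_le {w m : ℝ} (hw : 0 < w) (hm : 0 < m) :
    (2 ^ (⌈Real.logb 2 (m / w)⌉.toNat + 1) : ℝ)⁻¹ ≤ w / (2 * m) := by
  have h := le_two_pow_toNat_ceil_logb (div_pos hm hw)
  rw [div_le_iff₀ hw] at h
  rw [inv_le_comm₀ (by positivity) (by positivity), pow_succ, inv_div, div_le_iff₀ hw]
  linarith

theorem Finset.sum_Iio_add_le_sum_Iio {α M : Type*} [LinearOrder α] [LocallyFiniteOrderBot α]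
    [AddCommMonoid M] [PartialOrder M] [CanonicallyOrderedAdd M] (w : α → M) {i i' : α}
    (h : i < i') : ∑ j ∈ Iio i, w j + w i ≤ ∑ j ∈ Iio i', w j := by
  rw [sum_Iio_add_eq_sum_Iic]
  exact sum_le_sum_of_subset fun j hj => mem_Iio.2 ((mem_Iic.1 hj).trans_lt h)

theorem Finset.sum_Iio_add_le_sum {α M : Type*} [LinearOrder α] [LocallyFiniteOrderBot α]
    [Fintype α] [AddCommMonoid M] [PartialOrder M] [CanonicallyOrderedAdd M] (w : α → M)
    (i : α) : ∑ j ∈ Iio i, w j + w i ≤ ∑ j, w j := by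
  rw [sum_Iio_add_eq_sum_Iic]
  exact sum_le_sum_of_subset (subset_univ _)

theorem truncated_expansions_lex_increasing_general (n m : ℕ) (w : Fin n → ℕ)
    (hw : ∀ i, 0 < w i) (hsum : ∑ i, w i = m)
    (f : Fin n → ℝ)
    (hf : ∀ i, f i = (∑ j ∈ Finset.Iio i, (w j : ℝ)) / m + (w i : ℝ) / (2 * m))
    (σ : Fin n → List Bool)
    (hσ : ∀ i, σ i = binaryBits (f i) ((⌈Real.logb 2 ((m : ℝ) / (w i : ℝ))⌉).toNat + 1)) :
    ∀ i i' : Fin n, i < i' → List.Lex (· < ·) (σ i) (σ i') := by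
  intro i i' hii
  have hw' : ∀ j, (0 : ℝ) < w j := fun j => mod_cast hw j
  have hstep : ∑ j ∈ Iio i, (w j : ℝ) + w i ≤ ∑ j ∈ Iio i', (w j : ℝ) := by
    exact_mod_cast sum_Iio_add_le_sum_Iio w hii
  have hlast : ∑ j ∈ Iio i', (w j : ℝ) + w i' ≤ m := by
    exact_mod_cast hsum ▸ sum_Iio_add_le_sum w i'
  have hm : (0 : ℝ) < m := by
    linarith [hw' i', sum_nonneg fun j (_ : j ∈ Iio i') => (hw' j).le]
  have hfi : 0 ≤ f i := by
    rw [hf i]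
    have := sum_nonneg fun j (_ : j ∈ Iio i) => (hw' j).le
    positivity
  have hfi' : f i' < 1 := by
    rw [hf i']
    field_simp
    linarith [hw' i']
  have hgap : f i + w i / (2 * m) + w i' / (2 * m) ≤ f i' := by
    rw [hf i, hf i']
    field_simp
    linarith
  rw [hσ i, hσ i']
  exact binaryBits_lex_of_add_inv_two_pow_add_le hfi hfi' (by
    linarith [inv_two_pow_toNat_ceil_logb_le (hw' i) hm, inv_two_pow_toNat_ceil_logb_le (hw' i') hm])

theorem truncated_expansions_lex_increasing (n m : ℕ) (hm : 1 ≤ m) (w : Fin n → ℕ)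
    (hw : ∀ i, 0 < w i) (hsum : ∑ i, w i = m)
    (f : Fin n → ℝ)
    (hf : ∀ i, f i = (∑ j ∈ Finset.Iio i, (w j : ℝ)) / m + (w i : ℝ) / (2 * m))
    (σ : Fin n → List Bool)
    (hσ : ∀ i, σ i = binaryBits (f i) ((⌈Real.logb 2 ((m : ℝ) / (w i : ℝ))⌉).toNat + 1)) :
    ∀ i i' : Fin n, i < i' → List.Lex (· < ·) (σ i) (σ i') :=
  truncated_expansions_lex_increasing_general n m w hw hsum f hf σ hσ
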